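/- arXiv:2204.11516 — 3 statements merged into one kernel-verified Lean document; each statement's English description precedes it below -/
import Mathlib

section
/- Suppose 𝒜 satisfies the RIP with constant δ ∈ (0,1). Then for all u ∈ ℝ^{n1} and v ∈ ℝ^{n2} one has ‖𝒪*𝒟(uvᵀ)‖ ≤ δ·‖u‖·‖v‖ and ‖𝒟*𝒪(uvᵀ)‖ ≤ δ·‖u‖·‖v‖, where ‖·‖ on the left-hand sides denotes the spectral (operator) norm of the matrix and 𝒪*, 𝒟* are the adjoints of 𝒪, 𝒟 with respect to the Frobenius and Euclidean inner products. -/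
open MeasureTheory ProbabilityTheory Matrix Finset
open scoped BigOperators ENNReal NNReal RealInnerProductSpace

noncomputable section

namespace ALSPaper

/-- View a plain vector as an element of Euclidean space. -/
def toE {n : ℕ} (x : Fin n → ℝ) : EuclideanSpace ℝ (Fin n) :=
  (WithLp.equiv 2 (Fin n → ℝ)).symm x

/-- View an element of Euclidean space as a plain vector. -/
def ofE {n : ℕ} (x : EuclideanSpace ℝ (Fin n)) : Fin n → ℝ :=
  WithLp.equiv 2 (Fin n → ℝ) x

/-- The first standard basis vector. -/
def e1 (n : ℕ) : EuclideanSpace ℝ (Fin n) :=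
  toE fun i => if (i : ℕ) = 0 then 1 else 0

/-- Frobenius inner product. -/
def frobInner {n1 n2 : ℕ} (A B : Matrix (Fin n1) (Fin n2) ℝ) : ℝ :=
  ∑ i, ∑ j, A i j * B i j

/-- Frobenius norm. -/
def frobNorm {n1 n2 : ℕ} (A : Matrix (Fin n1) (Fin n2) ℝ) : ℝ :=
  Real.sqrt (frobInner A A)

/-- The measurement operator. -/
def calA {n1 n2 m : ℕ} (A : Fin m → Matrix (Fin n1) (Fin n2) ℝ)
    (X : Matrix (Fin n1) (Fin n2) ℝ) : EuclideanSpace ℝ (Fin m) :=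
  toE fun i => (Real.sqrt m)⁻¹ * frobInner (A i) X

/-- The adjoint of the measurement operator. -/
def calAdj {n1 n2 m : ℕ} (A : Fin m → Matrix (Fin n1) (Fin n2) ℝ)
    (w : EuclideanSpace ℝ (Fin m)) : Matrix (Fin n1) (Fin n2) ℝ :=
  ∑ i, ((Real.sqrt m)⁻¹ * ofE w i) • A i

/-- The restricted isometry property (RIP) with constant `δ` (for rank ≤ 4). -/
def HasRIP {n1 n2 m : ℕ} (A : Fin m → Matrix (Fin n1) (Fin n2) ℝ) (δ : ℝ) : Prop :=
  ∀ Z : Matrix (Fin n1) (Fin n2) ℝ, Z.rank ≤ 4 →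
    (1 - δ) * frobNorm Z ^ 2 ≤ ‖calA A Z‖ ^ 2 ∧ ‖calA A Z‖ ^ 2 ≤ (1 + δ) * frobNorm Z ^ 2

/-- Component of `v` parallel to the first standard basis vector. -/
def par {n : ℕ} (v : EuclideanSpace ℝ (Fin n)) : EuclideanSpace ℝ (Fin n) :=
  ⟪e1 n, v⟫ • e1 n

/-- Component of `v` orthogonal to the first standard basis vector. -/
def perp {n : ℕ} (v : EuclideanSpace ℝ (Fin n)) : EuclideanSpace ℝ (Fin n) :=
  v - par v

/-- The "diagonal block" part of a measurement matrix. -/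
def Dmat {n1 n2 : ℕ} (A : Matrix (Fin n1) (Fin n2) ℝ) : Matrix (Fin n1) (Fin n2) ℝ :=
  vecMulVec (ofE (e1 n1)) (ofE (e1 n1)) * A * vecMulVec (ofE (e1 n2)) (ofE (e1 n2))
    + (1 - vecMulVec (ofE (e1 n1)) (ofE (e1 n1))) * A *
        (1 - vecMulVec (ofE (e1 n2)) (ofE (e1 n2)))

/-- The "off-diagonal block" part of a measurement matrix. -/
def Omat {n1 n2 : ℕ} (A : Matrix (Fin n1) (Fin n2) ℝ) : Matrix (Fin n1) (Fin n2) ℝ :=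
  vecMulVec (ofE (e1 n1)) (ofE (e1 n1)) * A * (1 - vecMulVec (ofE (e1 n2)) (ofE (e1 n2)))
    + (1 - vecMulVec (ofE (e1 n1)) (ofE (e1 n1))) * A * vecMulVec (ofE (e1 n2)) (ofE (e1 n2))

/-- The (1,1) entry of a matrix. -/
def ent11 {n1 n2 : ℕ} (A : Matrix (Fin n1) (Fin n2) ℝ) : ℝ :=
  frobInner (vecMulVec (ofE (e1 n1)) (ofE (e1 n2))) A

/-- Spectral (operator) norm of a matrix. -/
def specNorm {n1 n2 : ℕ} (M : Matrix (Fin n1) (Fin n2) ℝ) : ℝ :=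
  ‖LinearMap.toContinuousLinearMap (Matrix.toEuclideanLin M)‖

/-- The normal equation for the least-squares update. -/
def NormalEq {n1 n2 m : ℕ} (A : Fin m → Matrix (Fin n1) (Fin n2) ℝ)
    (u : EuclideanSpace ℝ (Fin n1)) (v : EuclideanSpace ℝ (Fin n2)) : Prop :=
  u = ⟪v, e1 n2⟫ • e1 n1 +
    toE (((vecMulVec (ofE u) (ofE v) - vecMulVec (ofE (e1 n1)) (ofE (e1 n2))) -
      calAdj A (calA A (vecMulVec (ofE u) (ofE v) - vecMulVec (ofE (e1 n1)) (ofE (e1 n2)))))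
        *ᵥ ofE v)

/-- sin of the angle between two vectors. -/
def sinAngle {n : ℕ} (a b : EuclideanSpace ℝ (Fin n)) : ℝ :=
  Real.sqrt (1 - ⟪a, b⟫ ^ 2 / (‖a‖ ^ 2 * ‖b‖ ^ 2))

/-- `c_t` sequence. -/
def cseq (n2 t : ℕ) : ℝ := (1 + 1 / Real.log n2) ^ t - 1

/-- ALS iterates. -/
def IsALS {n1 n2 m : ℕ} (A : Fin m → Matrix (Fin n1) (Fin n2) ℝ)
    (y : EuclideanSpace ℝ (Fin m)) (v0 : EuclideanSpace ℝ (Fin n2))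
    (u : ℕ → EuclideanSpace ℝ (Fin n1)) (v : ℕ → EuclideanSpace ℝ (Fin n2))
    (uh : ℕ → EuclideanSpace ℝ (Fin n1)) (vh : ℕ → EuclideanSpace ℝ (Fin n2)) : Prop :=
  v 0 = v0 ∧
  ∀ t : ℕ,
    (∀ u' : EuclideanSpace ℝ (Fin n1),
      ‖y - calA A (vecMulVec (ofE (uh t)) (ofE (v t)))‖ ≤
        ‖y - calA A (vecMulVec (ofE u') (ofE (v t)))‖) ∧
    u (t + 1) = ‖uh t‖⁻¹ • uh t ∧
    (∀ v' : EuclideanSpace ℝ (Fin n2),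
      ‖y - calA A (vecMulVec (ofE (u (t + 1))) (ofE (vh t)))‖ ≤
        ‖y - calA A (vecMulVec (ofE (u (t + 1))) (ofE v'))‖) ∧
    v (t + 1) = ‖vh t‖⁻¹ • vh t

end ALSPaper

/-!
Pair `𝒪*𝒟(uvᵀ)` with unit test vectors `x, y`: by the adjoint identity and the self-adjointness
of the block projections, `⟪x, 𝒪*𝒟(uvᵀ) y⟫ = ⟪𝒜(O(xyᵀ)), 𝒜(D(uvᵀ))⟫`, where `D` and `O` are the
diagonal and off-diagonal block parts of a matrix. For a rank-one matrix both parts have rank at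
most two, they are Frobenius-orthogonal, and neither has larger Frobenius norm than the matrix.
Polarizing `𝒜(X ± Y)`, the RIP on rank-four matrices bounds `|⟪𝒜 X, 𝒜 Y⟫|` by `δ‖X‖_F‖Y‖_F` for
orthogonal `X, Y` of rank at most two, which gives `δ‖u‖‖v‖`.
-/

section NearIsometry

variable {E F : Type*} [NormedAddCommGroup E] [InnerProductSpace ℝ E]
  [NormedAddCommGroup F] [InnerProductSpace ℝ F]

theorem abs_inner_le_of_abs_norm_add_sub_sq_le {p q : F} {δ : ℝ}
    (hadd : |‖p + q‖ ^ 2 - 2| ≤ δ * 2) (hsub : |‖p - q‖ ^ 2 - 2| ≤ δ * 2) :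
    |⟪p, q⟫| ≤ δ := by
  rw [norm_add_sq_real] at hadd
  rw [norm_sub_sq_real] at hsub
  rw [abs_le] at *
  constructor <;> linarith

theorem abs_inner_map_le_of_near_isometry (T : E →ₗ[ℝ] F) {δ : ℝ} {x y : E} (hxy : ⟪x, y⟫ = 0)
    (hT : ∀ a b : ℝ, |‖T (a • x + b • y)‖ ^ 2 - ‖a • x + b • y‖ ^ 2| ≤
      δ * ‖a • x + b • y‖ ^ 2) :
    |⟪T x, T y⟫| ≤ δ * ‖x‖ * ‖y‖ := by
  rcases eq_or_ne x 0 with rfl | hx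
  · simp
  rcases eq_or_ne y 0 with rfl | hy
  · simp
  have hx' : 0 < ‖x‖ := norm_pos_iff.mpr hx
  have hy' : 0 < ‖y‖ := norm_pos_iff.mpr hy
  have hunit : ∀ s : ℝ, |s| = 1 →
      |‖T (‖x‖⁻¹ • x) + s • T (‖y‖⁻¹ • y)‖ ^ 2 - 2| ≤ δ * 2 := by
    intro s hs
    have hsq : ‖‖x‖⁻¹ • x + (s * ‖y‖⁻¹) • y‖ ^ 2 = 2 := by
      rw [norm_add_sq_real, inner_smul_left, inner_smul_right, hxy, norm_smul, norm_smul,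
        Real.norm_eq_abs, Real.norm_eq_abs, abs_mul, hs, abs_inv, abs_inv, abs_norm, abs_norm]
      field_simp
      ring
    have h := hT ‖x‖⁻¹ (s * ‖y‖⁻¹)
    rw [hsq] at h
    simpa [mul_smul] using h
  have key := abs_inner_le_of_abs_norm_add_sub_sq_le (by simpa using hunit 1 (by norm_num))
    (by simpa [sub_eq_add_neg] using hunit (-1) (by norm_num))
  rw [inner_smul_left, inner_smul_right, abs_mul, abs_mul] at key
  simp only [RCLike.conj_to_real, abs_inv, abs_norm] at key
  rw [inv_mul_le_iff₀ hx', inv_mul_le_iff₀ hy'] at key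
  linarith

end NearIsometry

namespace Matrix

variable {m n K : Type*} [Fintype n] [Field K]

theorem rank_add_le (A B : Matrix m n K) : (A + B).rank ≤ A.rank + B.rank := by
  unfold rank
  rw [mulVecLin_add]
  exact (Submodule.finrank_mono (LinearMap.range_add_le _ _)).trans
    (Submodule.finrank_add_le_finrank_add_finrank _ _)

theorem rank_smul_le [Fintype m] (c : K) (A : Matrix m n K) : (c • A).rank ≤ A.rank := by
  classical
  rw [smul_eq_diagonal_mul]
  exact rank_mul_le_right _ _

end Matrix

namespace ALSPaper

variable {n1 n2 m : ℕ}

section Frobenius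

def vectorize : Matrix (Fin n1) (Fin n2) ℝ ≃ₗ[ℝ] EuclideanSpace ℝ (Fin n1 × Fin n2) :=
  (LinearEquiv.curry ℝ ℝ (Fin n1) (Fin n2)).symm ≪≫ₗ (WithLp.linearEquiv 2 ℝ _).symm

@[simp]
theorem vectorize_apply (X : Matrix (Fin n1) (Fin n2) ℝ) (p : Fin n1 × Fin n2) :
    vectorize X p = X p.1 p.2 := rfl

theorem frobInner_eq_inner (X Y : Matrix (Fin n1) (Fin n2) ℝ) :
    frobInner X Y = ⟪vectorize X, vectorize Y⟫ := by
  simp [frobInner, PiLp.inner_apply, Fintype.sum_prod_type, mul_comm]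

theorem frobNorm_eq_norm (X : Matrix (Fin n1) (Fin n2) ℝ) : frobNorm X = ‖vectorize X‖ := by
  rw [frobNorm, frobInner_eq_inner, real_inner_self_eq_norm_sq, Real.sqrt_sq (norm_nonneg _)]

theorem frobNorm_nonneg (X : Matrix (Fin n1) (Fin n2) ℝ) : 0 ≤ frobNorm X := Real.sqrt_nonneg _

theorem frobInner_eq_trace (X Y : Matrix (Fin n1) (Fin n2) ℝ) :
    frobInner X Y = trace (Xᵀ * Y) := by
  simp only [frobInner, trace, Matrix.diag, mul_apply, transpose_apply]
  exact Finset.sum_comm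

theorem frobInner_add_left (X Y Z : Matrix (Fin n1) (Fin n2) ℝ) :
    frobInner (X + Y) Z = frobInner X Z + frobInner Y Z := by
  simp [frobInner_eq_inner, inner_add_left]

theorem frobInner_add_right (X Y Z : Matrix (Fin n1) (Fin n2) ℝ) :
    frobInner X (Y + Z) = frobInner X Y + frobInner X Z := by
  simp [frobInner_eq_inner, inner_add_right]

theorem frobNorm_vecMulVec (x : EuclideanSpace ℝ (Fin n1)) (y : EuclideanSpace ℝ (Fin n2)) :
    frobNorm (vecMulVec (ofE x) (ofE y)) = ‖x‖ * ‖y‖ := by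
  rw [frobNorm, EuclideanSpace.norm_eq, EuclideanSpace.norm_eq, ← Real.sqrt_mul (by positivity),
    Finset.sum_mul_sum]
  simp [frobInner, vecMulVec_apply, ofE, mul_mul_mul_comm, sq]

end Frobenius

section Measurement

def calALin (A : Fin m → Matrix (Fin n1) (Fin n2) ℝ) :
    Matrix (Fin n1) (Fin n2) ℝ →ₗ[ℝ] EuclideanSpace ℝ (Fin m) where
  toFun := calA A
  map_add' X Y := by
    ext i
    simp [calA, toE, frobInner_eq_inner, inner_add_right, mul_add]
  map_smul' c X := by
    ext i
    simp [calA, toE, frobInner_eq_inner, inner_smul_right]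
    ring

@[simp]
theorem calALin_apply (A : Fin m → Matrix (Fin n1) (Fin n2) ℝ) (X : Matrix (Fin n1) (Fin n2) ℝ) :
    calALin A X = calA A X := rfl

theorem HasRIP.abs_inner_calA_le {A : Fin m → Matrix (Fin n1) (Fin n2) ℝ} {δ : ℝ}
    (hRIP : HasRIP A δ) {X Y : Matrix (Fin n1) (Fin n2) ℝ} (hX : X.rank ≤ 2) (hY : Y.rank ≤ 2)
    (hXY : frobInner X Y = 0) :
    |⟪calA A X, calA A Y⟫| ≤ δ * frobNorm X * frobNorm Y := by
  have h := abs_inner_map_le_of_near_isometry (calALin A ∘ₗ vectorize.symm.toLinearMap)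
    (δ := δ) (x := vectorize X) (y := vectorize Y) (by rwa [← frobInner_eq_inner]) fun a b => ?_
  · simpa [frobNorm_eq_norm] using h
  have hrank : (a • X + b • Y).rank ≤ 4 :=
    (Matrix.rank_add_le _ _).trans (by
      linarith [(Matrix.rank_smul_le a X).trans hX, (Matrix.rank_smul_le b Y).trans hY])
  obtain ⟨hlo, hhi⟩ := hRIP _ hrank
  rw [← map_smul, ← map_smul, ← map_add, ← frobNorm_eq_norm]
  simp only [LinearMap.coe_comp, LinearEquiv.coe_coe, Function.comp_apply,
    LinearEquiv.symm_apply_apply, calALin_apply]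
  exact abs_sub_le_iff.mpr ⟨by linarith, by linarith⟩

theorem inner_toEuclideanLin (M : Matrix (Fin n1) (Fin n2) ℝ) (x : EuclideanSpace ℝ (Fin n1))
    (y : EuclideanSpace ℝ (Fin n2)) :
    ⟪x, toEuclideanLin M y⟫ = frobInner M (vecMulVec (ofE x) (ofE y)) := by
  simp only [PiLp.inner_apply, Real.inner_apply, frobInner, vecMulVec_apply, toLpLin_apply,
    mulVec, dotProduct, ofE, Finset.mul_sum]
  exact Finset.sum_congr rfl fun i _ => Finset.sum_congr rfl fun j _ => by simp; ring

theorem inner_toEuclideanLin_calAdj (B : Fin m → Matrix (Fin n1) (Fin n2) ℝ)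
    (w : EuclideanSpace ℝ (Fin m)) (x : EuclideanSpace ℝ (Fin n1))
    (y : EuclideanSpace ℝ (Fin n2)) :
    ⟪x, toEuclideanLin (calAdj B w) y⟫ = ⟪calA B (vecMulVec (ofE x) (ofE y)), w⟫ := by
  simp only [calAdj, map_sum, map_smul, LinearMap.sum_apply, LinearMap.smul_apply, inner_sum,
    inner_smul_right, inner_toEuclideanLin]
  simp only [PiLp.inner_apply, Real.inner_apply, calA, toE, ofE]
  exact Finset.sum_congr rfl fun k _ => by simp; ring

theorem specNorm_calAdj_le {B : Fin m → Matrix (Fin n1) (Fin n2) ℝ} {w : EuclideanSpace ℝ (Fin m)}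
    {K : ℝ} (hK : 0 ≤ K)
    (h : ∀ x y, ‖x‖ = 1 → ‖y‖ = 1 → ⟪calA B (vecMulVec (ofE x) (ofE y)), w⟫ ≤ K) :
    specNorm (calAdj B w) ≤ K := by
  refine ContinuousLinearMap.opNorm_le_of_re_inner_le hK fun y x hy hx => ?_
  rw [RCLike.re_to_real, real_inner_comm]
  exact (inner_toEuclideanLin_calAdj B w x y).trans_le (h x y hx hy)

end Measurement

section BlockParts

variable (P : Matrix (Fin n1) (Fin n1) ℝ) (Q : Matrix (Fin n2) (Fin n2) ℝ)

def diagPart (Z : Matrix (Fin n1) (Fin n2) ℝ) : Matrix (Fin n1) (Fin n2) ℝ :=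
  P * Z * Q + (1 - P) * Z * (1 - Q)

def offDiagPart (Z : Matrix (Fin n1) (Fin n2) ℝ) : Matrix (Fin n1) (Fin n2) ℝ :=
  P * Z * (1 - Q) + (1 - P) * Z * Q

theorem diagPart_add_offDiagPart (Z : Matrix (Fin n1) (Fin n2) ℝ) :
    diagPart P Q Z + offDiagPart P Q Z = Z := by
  simp only [diagPart, offDiagPart, Matrix.mul_sub, Matrix.sub_mul, Matrix.mul_one,
    Matrix.one_mul]
  abel

theorem frobInner_mul_mul_left (X Y : Matrix (Fin n1) (Fin n2) ℝ) :
    frobInner (P * X * Q) Y = frobInner X (Pᵀ * Y * Qᵀ) := by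
  simp only [frobInner_eq_trace, transpose_mul, Matrix.mul_assoc]
  rw [trace_mul_comm, Matrix.mul_assoc, Matrix.mul_assoc]

variable {P Q}

theorem rank_diagPart_vecMulVec_le (a : Fin n1 → ℝ) (b : Fin n2 → ℝ) :
    (diagPart P Q (vecMulVec a b)).rank ≤ 2 := by
  rw [diagPart, mul_vecMulVec, vecMulVec_mul, mul_vecMulVec, vecMulVec_mul]
  exact (Matrix.rank_add_le _ _).trans
    (add_le_add (rank_vecMulVec_le _ _) (rank_vecMulVec_le _ _))

theorem rank_offDiagPart_vecMulVec_le (a : Fin n1 → ℝ) (b : Fin n2 → ℝ) :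
    (offDiagPart P Q (vecMulVec a b)).rank ≤ 2 := by
  rw [offDiagPart, mul_vecMulVec, vecMulVec_mul, mul_vecMulVec, vecMulVec_mul]
  exact (Matrix.rank_add_le _ _).trans
    (add_le_add (rank_vecMulVec_le _ _) (rank_vecMulVec_le _ _))

theorem frobInner_diagPart_left (hPt : Pᵀ = P) (hQt : Qᵀ = Q) (X Y : Matrix (Fin n1) (Fin n2) ℝ) :
    frobInner (diagPart P Q X) Y = frobInner X (diagPart P Q Y) := by
  simp only [diagPart, frobInner_add_left, frobInner_add_right, frobInner_mul_mul_left,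
    transpose_sub, transpose_one, hPt, hQt]

theorem frobInner_offDiagPart_left (hPt : Pᵀ = P) (hQt : Qᵀ = Q)
    (X Y : Matrix (Fin n1) (Fin n2) ℝ) :
    frobInner (offDiagPart P Q X) Y = frobInner X (offDiagPart P Q Y) := by
  simp only [offDiagPart, frobInner_add_left, frobInner_add_right, frobInner_mul_mul_left,
    transpose_sub, transpose_one, hPt, hQt]

theorem diagPart_offDiagPart (hP : IsIdempotentElem P) (hQ : IsIdempotentElem Q)
    (Z : Matrix (Fin n1) (Fin n2) ℝ) : diagPart P Q (offDiagPart P Q Z) = 0 := by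
  have regroup : ∀ (A B : Matrix (Fin n1) (Fin n1) ℝ) (C D : Matrix (Fin n2) (Fin n2) ℝ),
      A * (B * Z * C) * D = A * B * Z * (C * D) := by
    intros; simp only [Matrix.mul_assoc]
  simp only [diagPart, offDiagPart, Matrix.mul_add, Matrix.add_mul, regroup,
    hP.mul_one_sub_self, hP.one_sub_mul_self, hQ.mul_one_sub_self, hQ.one_sub_mul_self,
    Matrix.zero_mul, Matrix.mul_zero, add_zero]

theorem frobInner_diagPart_offDiagPart (hP : IsIdempotentElem P) (hQ : IsIdempotentElem Q)
    (hPt : Pᵀ = P) (hQt : Qᵀ = Q) (X Y : Matrix (Fin n1) (Fin n2) ℝ) :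
    frobInner (diagPart P Q X) (offDiagPart P Q Y) = 0 := by
  rw [frobInner_diagPart_left hPt hQt, diagPart_offDiagPart hP hQ, frobInner_eq_inner,
    map_zero, inner_zero_right]

theorem frobNorm_sq_diagPart_add_offDiagPart (hP : IsIdempotentElem P)
    (hQ : IsIdempotentElem Q) (hPt : Pᵀ = P) (hQt : Qᵀ = Q) (Z : Matrix (Fin n1) (Fin n2) ℝ) :
    frobNorm (diagPart P Q Z) ^ 2 + frobNorm (offDiagPart P Q Z) ^ 2 = frobNorm Z ^ 2 := by
  have horth := frobInner_diagPart_offDiagPart hP hQ hPt hQt Z Z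
  rw [frobInner_eq_inner] at horth
  conv_rhs => rw [← diagPart_add_offDiagPart P Q Z]
  simp only [frobNorm_eq_norm, map_add]
  rw [norm_add_sq_real, horth]
  ring

theorem frobNorm_diagPart_le (hP : IsIdempotentElem P) (hQ : IsIdempotentElem Q)
    (hPt : Pᵀ = P) (hQt : Qᵀ = Q) (Z : Matrix (Fin n1) (Fin n2) ℝ) :
    frobNorm (diagPart P Q Z) ≤ frobNorm Z := by
  have := frobNorm_sq_diagPart_add_offDiagPart hP hQ hPt hQt Z
  exact (pow_le_pow_iff_left₀ (frobNorm_nonneg _) (frobNorm_nonneg _) two_ne_zero).mp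
    (by nlinarith [sq_nonneg (frobNorm (offDiagPart P Q Z))])

theorem frobNorm_offDiagPart_le (hP : IsIdempotentElem P) (hQ : IsIdempotentElem Q)
    (hPt : Pᵀ = P) (hQt : Qᵀ = Q) (Z : Matrix (Fin n1) (Fin n2) ℝ) :
    frobNorm (offDiagPart P Q Z) ≤ frobNorm Z := by
  have := frobNorm_sq_diagPart_add_offDiagPart hP hQ hPt hQt Z
  exact (pow_le_pow_iff_left₀ (frobNorm_nonneg _) (frobNorm_nonneg _) two_ne_zero).mp
    (by nlinarith [sq_nonneg (frobNorm (diagPart P Q Z))])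

theorem calA_diagPart (hPt : Pᵀ = P) (hQt : Qᵀ = Q) (A : Fin m → Matrix (Fin n1) (Fin n2) ℝ)
    (Z : Matrix (Fin n1) (Fin n2) ℝ) :
    calA (fun i => diagPart P Q (A i)) Z = calA A (diagPart P Q Z) := by
  ext i
  simp only [calA, toE, frobInner_diagPart_left hPt hQt]

theorem calA_offDiagPart (hPt : Pᵀ = P) (hQt : Qᵀ = Q) (A : Fin m → Matrix (Fin n1) (Fin n2) ℝ)
    (Z : Matrix (Fin n1) (Fin n2) ℝ) :
    calA (fun i => offDiagPart P Q (A i)) Z = calA A (offDiagPart P Q Z) := by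
  ext i
  simp only [calA, toE, frobInner_offDiagPart_left hPt hQt]

theorem HasRIP.abs_inner_calA_diagPart_offDiagPart_le {A : Fin m → Matrix (Fin n1) (Fin n2) ℝ}
    {δ : ℝ} (hRIP : HasRIP A δ) (hδ : 0 ≤ δ) (hP : IsIdempotentElem P)
    (hQ : IsIdempotentElem Q) (hPt : Pᵀ = P) (hQt : Qᵀ = Q) (x u : EuclideanSpace ℝ (Fin n1))
    (y v : EuclideanSpace ℝ (Fin n2)) :
    |⟪calA A (diagPart P Q (vecMulVec (ofE x) (ofE y))),
        calA A (offDiagPart P Q (vecMulVec (ofE u) (ofE v)))⟫| ≤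
      δ * (‖x‖ * ‖y‖) * (‖u‖ * ‖v‖) := by
  refine (hRIP.abs_inner_calA_le (rank_diagPart_vecMulVec_le _ _)
    (rank_offDiagPart_vecMulVec_le _ _) (frobInner_diagPart_offDiagPart hP hQ hPt hQt _ _)).trans ?_
  rw [← frobNorm_vecMulVec, ← frobNorm_vecMulVec]
  exact mul_le_mul (mul_le_mul_of_nonneg_left (frobNorm_diagPart_le hP hQ hPt hQt _) hδ)
    (frobNorm_offDiagPart_le hP hQ hPt hQt _) (frobNorm_nonneg _)
    (mul_nonneg hδ (frobNorm_nonneg _))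

end BlockParts

def e1Proj (n : ℕ) : Matrix (Fin n) (Fin n) ℝ := vecMulVec (ofE (e1 n)) (ofE (e1 n))

theorem transpose_e1Proj (n : ℕ) : (e1Proj n)ᵀ = e1Proj n := transpose_vecMulVec _ _

theorem isIdempotentElem_e1Proj (n : ℕ) : IsIdempotentElem (e1Proj n) := by
  cases n with
  | zero => exact Subsingleton.elim _ _
  | succ n =>
    have he : ofE (e1 (n + 1)) ⬝ᵥ ofE (e1 (n + 1)) = 1 := by
      simp [e1, ofE, toE, dotProduct, Fin.val_eq_zero_iff]
    rw [IsIdempotentElem, e1Proj, vecMulVec_mul_vecMulVec, he, one_smul]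

theorem Dmat_eq_diagPart (Z : Matrix (Fin n1) (Fin n2) ℝ) :
    Dmat Z = diagPart (e1Proj n1) (e1Proj n2) Z := rfl

theorem Omat_eq_offDiagPart (Z : Matrix (Fin n1) (Fin n2) ℝ) :
    Omat Z = offDiagPart (e1Proj n1) (e1Proj n2) Z := rfl

theorem statement1_general {n1 n2 m : ℕ} (A : Fin m → Matrix (Fin n1) (Fin n2) ℝ) (δ : ℝ)
    (hδ0 : 0 < δ) (hRIP : HasRIP A δ)
    (u : EuclideanSpace ℝ (Fin n1)) (v : EuclideanSpace ℝ (Fin n2)) :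
    specNorm (calAdj (fun i => Omat (A i))
        (calA (fun i => Dmat (A i)) (vecMulVec (ofE u) (ofE v)))) ≤ δ * ‖u‖ * ‖v‖ ∧
    specNorm (calAdj (fun i => Dmat (A i))
        (calA (fun i => Omat (A i)) (vecMulVec (ofE u) (ofE v)))) ≤ δ * ‖u‖ * ‖v‖ := by
  have hP := isIdempotentElem_e1Proj n1
  have hQ := isIdempotentElem_e1Proj n2
  have hPt := transpose_e1Proj n1
  have hQt := transpose_e1Proj n2
  have hbound x u y v := (le_abs_self _).trans
    (hRIP.abs_inner_calA_diagPart_offDiagPart_le hδ0.le hP hQ hPt hQt x u y v)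
  constructor <;> refine specNorm_calAdj_le (by positivity) fun x y hx hy => ?_ <;>
    simp only [Dmat_eq_diagPart, Omat_eq_offDiagPart, calA_diagPart hPt hQt,
      calA_offDiagPart hPt hQt]
  · simpa [real_inner_comm, hx, hy, mul_assoc] using hbound u x v y
  · simpa [hx, hy, mul_assoc] using hbound x u y v

/-- If `𝒜` satisfies the RIP with constant `δ ∈ (0,1)`, then for all `u, v` one has
`‖𝒪*𝒟(uvᵀ)‖ ≤ δ‖u‖‖v‖` and `‖𝒟*𝒪(uvᵀ)‖ ≤ δ‖u‖‖v‖` in the spectral norm. -/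
theorem statement1 {n1 n2 m : ℕ} (A : Fin m → Matrix (Fin n1) (Fin n2) ℝ) (δ : ℝ)
    (hδ0 : 0 < δ) (hδ1 : δ < 1) (hRIP : HasRIP A δ)
    (u : EuclideanSpace ℝ (Fin n1)) (v : EuclideanSpace ℝ (Fin n2)) :
    specNorm (calAdj (fun i => Omat (A i))
        (calA (fun i => Dmat (A i)) (vecMulVec (ofE u) (ofE v)))) ≤ δ * ‖u‖ * ‖v‖ ∧
    specNorm (calAdj (fun i => Dmat (A i))
        (calA (fun i => Omat (A i)) (vecMulVec (ofE u) (ofE v)))) ≤ δ * ‖u‖ * ‖v‖ :=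
  statement1_general A δ hδ0 hRIP u v

end ALSPaper
end
end

section
/- There exists an absolute constant c > 0 such that the following holds. With probability at least 1 − O(exp(−c·min{m, min(n1,n2)})) it holds that (1/m)·‖(Σ_{i=1}^m (A_i)_{1,1} O_i) v_⋆‖ ≤ 4·√(n1/m) and (1/m)·‖(Σ_{i=1}^m (A_i)_{1,1} Õ_i) v_⋆‖ ≤ 4·√(n1/m). -/
/-!
For `j ≠ 1` the `j`-th entry of `(∑ i, (A_i)₁₁ O_i) v_⋆` is `∑ i, gᵢ xᵢⱼ` with `gᵢ = (A_i)₁₁` and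
`xᵢⱼ = (A_i)ⱼ₁` (`(Â_i)ⱼ₁` for `Õ_i`), all independent standard Gaussians, and its first entry
vanishes, so it suffices that `∑ⱼ (∑ᵢ gᵢ xᵢⱼ)² ≤ 16 n₁ m` with high probability.
Since `E exp(z²/4) = √2`, a Chernoff bound gives `‖g‖² ≤ 4m` outside probability `e^{-m/2}`.
Given `g`, the sums `∑ᵢ gᵢ xᵢⱼ` are independent `N(0, ‖g‖²)`; on `‖g‖² ≤ 4m` this gives
`E exp((∑ᵢ gᵢ xᵢⱼ)² / 16m) ≤ √2`, and a second Chernoff bound costs another `e^{-n₁/2}`.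
-/

open MeasureTheory ProbabilityTheory Matrix Finset
open scoped BigOperators ENNReal NNReal RealInnerProductSpace

noncomputable section

namespace ALSPaper

/-- The auxiliary measurement matrices `Ã_i` obtained from `A_i` by resampling the first row
and first column (except the (1,1) entry) using `Â_i`. -/
def Atil {n1 n2 m : ℕ} (A Ahat : Fin m → Matrix (Fin n1) (Fin n2) ℝ) (i : Fin m) :
    Matrix (Fin n1) (Fin n2) ℝ :=
  Matrix.of fun j k =>
    if ((j : ℕ) ≠ 0 ∧ (k : ℕ) ≠ 0) ∨ ((j : ℕ) = 0 ∧ (k : ℕ) = 0) then A i j k else Ahat i j k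

section Probability

open Real

local notation "𝒩[" ι "]" => Measure.pi fun _ : ι => gaussianReal 0 1

variable {ι κ : Type*} [Fintype ι] [Fintype κ]

lemma ofReal_one_sub_le_measure {α : Type*} [MeasurableSpace α] {μ : Measure α}
    [IsProbabilityMeasure μ] {s : Set α} {x : ℝ} (hx : 0 ≤ x) (h : μ sᶜ ≤ ENNReal.ofReal x) :
    ENNReal.ofReal (1 - x) ≤ μ s := by
  rw [ENNReal.ofReal_sub _ hx, ENNReal.ofReal_one, tsub_le_iff_right]
  calc 1 = μ (s ∪ sᶜ) := by rw [Set.union_compl_self, measure_univ]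
    _ ≤ μ s + μ sᶜ := measure_union_le _ _
    _ ≤ μ s + ENNReal.ofReal x := by gcongr

lemma measure_inter_lt_le_exp_mul_setLIntegral {α : Type*} [MeasurableSpace α] (μ : Measure α)
    (S : Set α) {f : α → ℝ} (hf : Measurable f) {l : ℝ} (hl : 0 ≤ l) (t : ℝ) :
    μ (S ∩ {x | t < f x}) ≤
      ENNReal.ofReal (exp (-(l * t))) * ∫⁻ x in S, ENNReal.ofReal (exp (l * f x)) ∂μ := by
  have hmeas : MeasurableSet {x | t < f x} := measurableSet_lt measurable_const hf
  rw [← lintegral_const_mul _ (by fun_prop), Set.inter_comm, ← Measure.restrict_apply hmeas,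
    ← lintegral_indicator_one hmeas]
  refine lintegral_mono fun x => ?_
  by_cases hx : t < f x
  · rw [Set.indicator_of_mem (show x ∈ {x | t < f x} from hx), Pi.one_apply,
      ← ENNReal.ofReal_mul (exp_pos _).le, ← exp_add, ← ENNReal.ofReal_one, ← exp_zero]
    exact ENNReal.ofReal_le_ofReal (exp_le_exp.2 (by nlinarith))
  · simp [hx]

lemma lintegral_pi_prod {α : ι → Type*} [∀ i, MeasurableSpace (α i)] {μ : ∀ i, Measure (α i)}
    [∀ i, IsProbabilityMeasure (μ i)] {f : ∀ i, α i → ℝ≥0∞} (hf : ∀ i, Measurable (f i)) :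
    ∫⁻ x, ∏ i, f i (x i) ∂Measure.pi μ = ∏ i, ∫⁻ y, f i y ∂μ i :=
  (lintegral_prod_eq_prod_lintegral_of_indepFun _ (fun i (x : ∀ i, α i) => f i (x i))
    (iIndepFun_pi fun i => (hf i).aemeasurable) fun i => (hf i).comp (measurable_pi_apply i)).trans
    (Finset.prod_congr rfl fun i _ => (measurePreserving_eval μ i).lintegral_comp (hf i))

lemma measurePreserving_comp_of_injective {α : Type*} [MeasurableSpace α] {μ : ι → Measure α}
    [∀ i, IsProbabilityMeasure (μ i)] {e : κ → ι} (he : Function.Injective e) :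
    MeasurePreserving (fun x : ι → α => x ∘ e) (Measure.pi μ) (Measure.pi fun k => μ (e k)) := by
  refine ⟨by fun_prop, ?_⟩
  have hindep := (iIndepFun_pi (μ := μ) (X := fun _ a => a) fun _ => aemeasurable_id).precomp he
  rw [iIndepFun_iff_map_fun_eq_pi_map fun k => (measurable_pi_apply _).aemeasurable] at hindep
  have heval : ∀ k, (Measure.pi μ).map (fun x => x (e k)) = μ (e k) :=
    fun k => (measurePreserving_eval μ (e k)).map_eq
  simp only [heval] at hindep
  exact hindep

lemma measurePreserving_inl_curry_inr {α : Type*} [MeasurableSpace α] (μ : Measure α)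
    [IsProbabilityMeasure μ] :
    MeasurePreserving (fun y : ι ⊕ κ × ι → α => (fun i => y (.inl i), fun k i => y (.inr (k, i))))
      (Measure.pi fun _ => μ)
      ((Measure.pi fun _ : ι => μ).prod (Measure.pi fun _ : κ => Measure.pi fun _ : ι => μ)) := by
  have hcurry : MeasurePreserving (MeasurableEquiv.curry κ ι α) (Measure.pi fun _ => μ)
      (Measure.pi fun _ : κ => Measure.pi fun _ : ι => μ) :=
    ⟨(MeasurableEquiv.curry κ ι α).measurable, by
      simpa [Measure.infinitePi_eq_pi] using Measure.infinitePi_map_curry fun (_ : κ) (_ : ι) => μ⟩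
  exact ((MeasurePreserving.id _).prod hcurry).comp
    (measurePreserving_sumPiEquivProdPi (X := fun _ : ι ⊕ κ × ι => α) fun _ => μ)

lemma lintegral_exp_mul_sq_gaussianReal {t : ℝ} (ht : t < 1 / 2) :
    ∫⁻ z, ENNReal.ofReal (exp (t * z ^ 2)) ∂gaussianReal 0 1 =
      ENNReal.ofReal (√(1 - 2 * t))⁻¹ := by
  have hb : 0 < 1 / 2 - t := by linarith
  have hdensity : ∀ z : ℝ, gaussianPDF 0 1 z * ENNReal.ofReal (exp (t * z ^ 2)) =
      ENNReal.ofReal ((√(2 * π))⁻¹ * exp (-(1 / 2 - t) * z ^ 2)) := by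
    intro z
    rw [gaussianPDF, ← ENNReal.ofReal_mul (gaussianPDFReal_nonneg 0 1 z), gaussianPDFReal]
    simp only [NNReal.coe_one, mul_one, sub_zero]
    rw [mul_assoc, ← exp_add]
    congr 3
    ring
  rw [gaussianReal_of_var_ne_zero 0 one_ne_zero,
    lintegral_withDensity_eq_lintegral_mul _ (measurable_gaussianPDF 0 1) (by fun_prop)]
  simp only [Pi.mul_apply, hdensity]
  rw [← ofReal_integral_eq_lintegral_ofReal ((integrable_exp_neg_mul_sq hb).const_mul _)
    (ae_of_all _ fun z => by positivity), integral_const_mul, integral_gaussian]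
  congr 1
  rw [← sqrt_inv, ← sqrt_inv, ← sqrt_mul (by positivity)]
  congr 1
  field_simp

lemma map_pi_gaussianReal_sum_mul (a : ι → ℝ) :
    𝒩[ι].map (fun x => ∑ i, a i * x i) = (gaussianReal 0 1).map (fun z => √(∑ i, a i ^ 2) * z) := by
  set L : StrongDual ℝ (EuclideanSpace ℝ ι) := innerSL ℝ (WithLp.toLp 2 a)
  have hL : (fun x : ι → ℝ => ∑ i, a i * x i) = L ∘ WithLp.toLp 2 := by
    ext x
    simp [L, EuclideanSpace.inner_eq_star_dotProduct, dotProduct, mul_comm]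
  rw [hL, ← Measure.map_map L.continuous.measurable (by fun_prop), map_pi_eq_stdGaussian,
    IsGaussian.map_eq_gaussianReal, integral_strongDual_stdGaussian, variance_dual_stdGaussian,
    gaussianReal_map_const_mul]
  congr 1
  · simp
  · ext
    have : 0 ≤ ∑ i, a i ^ 2 := by positivity
    simp [L, EuclideanSpace.norm_sq_eq, this]

lemma lintegral_exp_mul_sq_sum_pi (a : ι → ℝ) {t : ℝ} (ht : t * ∑ i, a i ^ 2 < 1 / 2) :
    ∫⁻ x, ENNReal.ofReal (exp (t * (∑ i, a i * x i) ^ 2)) ∂𝒩[ι] =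
      ENNReal.ofReal (√(1 - 2 * (t * ∑ i, a i ^ 2)))⁻¹ := by
  rw [← lintegral_map (f := fun y => ENNReal.ofReal (exp (t * y ^ 2))) (by fun_prop)
    (by fun_prop), map_pi_gaussianReal_sum_mul, lintegral_map (by fun_prop) (by fun_prop)]
  simp_rw [mul_pow, sq_sqrt (by positivity : (0 : ℝ) ≤ ∑ i, a i ^ 2), ← mul_assoc t]
  exact lintegral_exp_mul_sq_gaussianReal ht

lemma lintegral_exp_mul_sum_sq_pi {t : ℝ} (ht : t < 1 / 2) :
    ∫⁻ x, ENNReal.ofReal (exp (t * ∑ i, x i ^ 2)) ∂𝒩[ι] =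
      ENNReal.ofReal (√(1 - 2 * t))⁻¹ ^ Fintype.card ι := by
  simp_rw [Finset.mul_sum, exp_sum, ENNReal.ofReal_prod_of_nonneg fun _ _ => (exp_pos _).le]
  rw [lintegral_pi_prod (f := fun _ y => ENNReal.ofReal (exp (t * y ^ 2))) fun _ => by fun_prop]
  simp [lintegral_exp_mul_sq_gaussianReal ht]

lemma lintegral_exp_mul_sum_sq_inner_pi (g : ι → ℝ) {l : ℝ} (hl : l * ∑ i, g i ^ 2 < 1 / 2) :
    ∫⁻ X, ENNReal.ofReal (exp (l * ∑ k, (∑ i, g i * X k i) ^ 2)) ∂(Measure.pi fun _ : κ => 𝒩[ι]) =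
      ENNReal.ofReal (√(1 - 2 * (l * ∑ i, g i ^ 2)))⁻¹ ^ Fintype.card κ := by
  have hprod : ∀ X : κ → ι → ℝ, ENNReal.ofReal (exp (l * ∑ k, (∑ i, g i * X k i) ^ 2)) =
      ∏ k, ENNReal.ofReal (exp (l * (∑ i, g i * X k i) ^ 2)) := fun X => by
    rw [Finset.mul_sum, exp_sum, ENNReal.ofReal_prod_of_nonneg fun _ _ => (exp_pos _).le]
  rw [lintegral_congr fun X => hprod X,
    lintegral_pi_prod (f := fun _ (x : ι → ℝ) => ENNReal.ofReal (exp (l * (∑ i, g i * x i) ^ 2)))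
      fun _ => by fun_prop]
  simp [lintegral_exp_mul_sq_sum_pi g hl]

lemma measure_sum_sq_le_and_lt_sum_sq_inner_le {l s : ℝ} (hl : 0 ≤ l) (hs : l * s < 1 / 2)
    (t : ℝ) :
    (𝒩[ι].prod (Measure.pi fun _ : κ => 𝒩[ι]))
      {p | ∑ i, p.1 i ^ 2 ≤ s ∧ t < ∑ k, (∑ i, p.1 i * p.2 k i) ^ 2} ≤
      ENNReal.ofReal (exp (-(l * t))) *
        ENNReal.ofReal (√(1 - 2 * (l * s)))⁻¹ ^ Fintype.card κ := by
  set S : Set (ι → ℝ) := {g | ∑ i, g i ^ 2 ≤ s}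
  have hS : MeasurableSet S := measurableSet_le (by fun_prop) measurable_const
  have hsub : {p : (ι → ℝ) × (κ → ι → ℝ) | ∑ i, p.1 i ^ 2 ≤ s ∧
      t < ∑ k, (∑ i, p.1 i * p.2 k i) ^ 2} ⊆
      S ×ˢ Set.univ ∩ {p | t < ∑ k, (∑ i, p.1 i * p.2 k i) ^ 2} :=
    fun p hp => ⟨⟨hp.1, trivial⟩, hp.2⟩
  refine (measure_mono hsub).trans <| (measure_inter_lt_le_exp_mul_setLIntegral _ _
    (by fun_prop) hl t).trans (mul_le_mul_right ?_ _)
  rw [← Measure.prod_restrict, Measure.restrict_univ, lintegral_prod _ (by fun_prop)]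
  have hinner : ∀ g ∈ S, ∫⁻ X, ENNReal.ofReal (exp (l * ∑ k, (∑ i, g i * X k i) ^ 2))
      ∂(Measure.pi fun _ : κ => 𝒩[ι]) ≤ ENNReal.ofReal (√(1 - 2 * (l * s)))⁻¹ ^ Fintype.card κ := by
    intro g hg
    have hgs : l * ∑ i, g i ^ 2 ≤ l * s := mul_le_mul_of_nonneg_left hg hl
    rw [lintegral_exp_mul_sum_sq_inner_pi g (hgs.trans_lt hs)]
    gcongr
    exact sqrt_pos.2 (by linarith)
  calc _ ≤ ∫⁻ _, ENNReal.ofReal (√(1 - 2 * (l * s)))⁻¹ ^ Fintype.card κ ∂𝒩[ι].restrict S :=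
        lintegral_mono_ae ((ae_restrict_mem hS).mono hinner)
    _ ≤ _ := by
        rw [lintegral_const, Measure.restrict_apply_univ]
        exact mul_le_of_le_one_right' prob_le_one

lemma ofReal_exp_neg_mul_sqrt_two_pow_le (k : ℕ) :
    ENNReal.ofReal (exp (-k)) * ENNReal.ofReal √2 ^ k ≤ ENNReal.ofReal (exp (-(k / 2))) := by
  have hsqrt : √2 ≤ exp (1 / 2) := by
    rw [exp_half]
    exact sqrt_le_sqrt (by linarith [add_one_le_exp (1 : ℝ)])
  rw [← ENNReal.ofReal_pow (sqrt_nonneg 2), ← ENNReal.ofReal_mul (exp_pos _).le]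
  refine ENNReal.ofReal_le_ofReal ?_
  calc exp (-k) * √2 ^ k ≤ exp (-k) * exp (1 / 2) ^ k := by gcongr
    _ = exp (-(k / 2)) := by rw [← exp_nat_mul, ← exp_add]; ring_nf

lemma inv_sqrt_one_sub_two_mul_quarter : (√(1 - 2 * (1 / 4 : ℝ)))⁻¹ = √2 := by
  rw [show (1 : ℝ) - 2 * (1 / 4) = 2⁻¹ by norm_num, sqrt_inv, inv_inv]

lemma measure_lt_sum_sq_inner_le [Nonempty ι] {n : ℕ} (hκ : Fintype.card κ ≤ n) :
    (𝒩[ι].prod (Measure.pi fun _ : κ => 𝒩[ι]))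
      {p | 16 * n * Fintype.card ι < ∑ k, (∑ i, p.1 i * p.2 k i) ^ 2} ≤
      ENNReal.ofReal (exp (-(Fintype.card ι / 2))) + ENNReal.ofReal (exp (-(n / 2))) := by
  set m : ℕ := Fintype.card ι
  have hm : (0 : ℝ) < m := Nat.cast_pos.2 Fintype.card_pos
  set G : Set (ι → ℝ) := {g | 4 * m < ∑ i, g i ^ 2}
  have hsplit : {p : (ι → ℝ) × (κ → ι → ℝ) | 16 * n * m < ∑ k, (∑ i, p.1 i * p.2 k i) ^ 2} ⊆
      Prod.fst ⁻¹' G ∪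
        {p | ∑ i, p.1 i ^ 2 ≤ 4 * m ∧ 16 * n * m < ∑ k, (∑ i, p.1 i * p.2 k i) ^ 2} := by
    intro p hp
    by_cases hg : 4 * m < ∑ i, p.1 i ^ 2
    · exact Or.inl hg
    · exact Or.inr ⟨not_lt.1 hg, hp⟩
  have hG : 𝒩[ι] G ≤ ENNReal.ofReal (exp (-m)) * ENNReal.ofReal √2 ^ m := by
    have := measure_inter_lt_le_exp_mul_setLIntegral 𝒩[ι] Set.univ
      (f := fun g => ∑ i, g i ^ 2) (by fun_prop) (by norm_num : (0 : ℝ) ≤ 1 / 4) (4 * m)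
    rw [Set.univ_inter, Measure.restrict_univ, lintegral_exp_mul_sum_sq_pi (by norm_num),
      inv_sqrt_one_sub_two_mul_quarter] at this
    convert this using 4
    ring
  have hB := measure_sum_sq_le_and_lt_sum_sq_inner_le (ι := ι) (κ := κ) (l := 1 / (16 * m))
    (s := 4 * m) (by positivity) (by field_simp; norm_num) (16 * n * m)
  rw [show 1 / (16 * m) * (4 * m) = (1 / 4 : ℝ) by field_simp; norm_num,
    show 1 / (16 * m) * (16 * n * m) = (n : ℝ) by field_simp, inv_sqrt_one_sub_two_mul_quarter]
    at hB
  calc _ ≤ _ := measure_mono hsplit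
    _ ≤ _ := measure_union_le _ _
    _ ≤ ENNReal.ofReal (exp (-m)) * ENNReal.ofReal √2 ^ m +
          ENNReal.ofReal (exp (-n)) * ENNReal.ofReal √2 ^ n := by
        rw [measurePreserving_fst.measure_preimage
          (measurableSet_lt measurable_const (by fun_prop)).nullMeasurableSet]
        gcongr
        refine hB.trans ?_
        gcongr
        exact ENNReal.one_le_ofReal.2 (one_le_sqrt.2 one_le_two)
    _ ≤ _ := add_le_add (ofReal_exp_neg_mul_sqrt_two_pow_le m)
          (ofReal_exp_neg_mul_sqrt_two_pow_le n)

lemma measure_lt_sum_sq_inner_le_of_map_eq_pi [Nonempty ι] {Ω δ : Type*} [MeasurableSpace Ω]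
    [Fintype δ] {μ : Measure Ω} {F : Ω → δ → ℝ} (hF : μ.map F = 𝒩[δ]) {e : ι ⊕ κ × ι → δ}
    (he : Function.Injective e) {n : ℕ} (hκ : Fintype.card κ ≤ n) :
    μ {ω | 16 * n * Fintype.card ι < ∑ k, (∑ i, F ω (e (.inl i)) * F ω (e (.inr (k, i)))) ^ 2} ≤
      ENNReal.ofReal (exp (-(Fintype.card ι / 2))) + ENNReal.ofReal (exp (-(n / 2))) := by
  have hF_meas : AEMeasurable F μ := aemeasurable_of_map_neZero (by rw [hF]; infer_instance)
  have hΦ := (measurePreserving_inl_curry_inr (ι := ι) (κ := κ) (gaussianReal 0 1)).comp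
    (measurePreserving_comp_of_injective (μ := fun _ : δ => gaussianReal 0 1) he)
  have hE : MeasurableSet {p : (ι → ℝ) × (κ → ι → ℝ) |
      16 * n * Fintype.card ι < ∑ k, (∑ i, p.1 i * p.2 k i) ^ 2} :=
    measurableSet_lt measurable_const (by fun_prop)
  refine le_of_eq_of_le ?_ (measure_lt_sum_sq_inner_le hκ)
  rw [← hΦ.measure_preimage hE.nullMeasurableSet, ← hF,
    Measure.map_apply_of_aemeasurable hF_meas (hΦ.measurable hE)]
  rfl

lemma two_mul_ofReal_exp_add_le (m n1 n2 : ℕ) :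
    2 * (ENNReal.ofReal (exp (-(m / 2))) + ENNReal.ofReal (exp (-(n1 / 2)))) ≤
      ENNReal.ofReal (4 * exp (-(1 / 2) * min (m : ℝ) (min (n1 : ℝ) (n2 : ℝ)))) := by
  have hexp : ∀ k : ℕ, min (m : ℝ) (min (n1 : ℝ) (n2 : ℝ)) ≤ k →
      ENNReal.ofReal (exp (-(k / 2))) ≤
        ENNReal.ofReal (exp (-(1 / 2) * min (m : ℝ) (min (n1 : ℝ) (n2 : ℝ)))) :=
    fun k hk => ENNReal.ofReal_le_ofReal (exp_le_exp.2 (by linarith))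
  grw [hexp m (min_le_left _ _), hexp n1 ((min_le_right _ _).trans (min_le_left _ _)),
    ENNReal.ofReal_mul (by norm_num), ENNReal.ofReal_ofNat]
  exact le_of_eq (by ring)

end Probability

section Measurements

variable {n1 n2 : ℕ}

lemma ofE_e1 {n : ℕ} (hn : 0 < n) : ofE (e1 n) = Pi.single ⟨0, hn⟩ 1 := by
  ext i
  simp [ofE, e1, toE, Pi.single_apply, Fin.ext_iff]

lemma ent11_eq (hn1 : 0 < n1) (hn2 : 0 < n2) (M : Matrix (Fin n1) (Fin n2) ℝ) :
    ent11 M = M ⟨0, hn1⟩ ⟨0, hn2⟩ := by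
  simp [ent11, frobInner, ofE_e1 hn1, ofE_e1 hn2, vecMulVec_apply, Pi.single_apply]

lemma Omat_mulVec_e1 (hn1 : 0 < n1) (hn2 : 0 < n2) (M : Matrix (Fin n1) (Fin n2) ℝ)
    (j : Fin n1) :
    (Omat M *ᵥ ofE (e1 n2)) j = if (j : ℕ) = 0 then 0 else M j ⟨0, hn2⟩ := by
  simp only [Omat, Matrix.add_mulVec, ← Matrix.mulVec_mulVec, Matrix.sub_mulVec,
    Matrix.one_mulVec, vecMulVec_mulVec, ofE_e1 hn1, ofE_e1 hn2]
  split_ifs with hj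
  · obtain rfl : j = ⟨0, hn1⟩ := Fin.ext hj
    simp
  · simp [Fin.ext_iff, hj]

lemma norm_sum_ent11_smul_Omat_mulVec_e1 (hn1 : 0 < n1) (hn2 : 0 < n2) {m : ℕ}
    (B C : Fin m → Matrix (Fin n1) (Fin n2) ℝ) :
    ‖toE ((∑ i, ent11 (B i) • Omat (C i)) *ᵥ ofE (e1 n2))‖ =
      √(∑ j : {j : Fin n1 // (j : ℕ) ≠ 0}, (∑ i, B i ⟨0, hn1⟩ ⟨0, hn2⟩ * C i j ⟨0, hn2⟩) ^ 2) := by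
  rw [EuclideanSpace.norm_eq, ← Finset.sum_subtype (univ.filter fun j : Fin n1 => (j : ℕ) ≠ 0)
    (by simp) (fun j => (∑ i, B i ⟨0, hn1⟩ ⟨0, hn2⟩ * C i j ⟨0, hn2⟩) ^ 2), Finset.sum_filter]
  congr 1
  refine Finset.sum_congr rfl fun j _ => ?_
  simp only [toE, WithLp.equiv_symm_apply, Real.norm_eq_abs, sq_abs, Matrix.sum_mulVec,
    Matrix.smul_mulVec, Finset.sum_apply, Pi.smul_apply, Omat_mulVec_e1 hn1 hn2, ent11_eq hn1 hn2]
  by_cases hj : (j : ℕ) = 0 <;> simp [hj]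

lemma one_div_mul_norm_sum_ent11_smul_Omat_mulVec_e1_le (hn1 : 0 < n1) (hn2 : 0 < n2) {m : ℕ}
    (hm : 0 < m) (B C : Fin m → Matrix (Fin n1) (Fin n2) ℝ)
    (h : ∑ j : {j : Fin n1 // (j : ℕ) ≠ 0}, (∑ i, B i ⟨0, hn1⟩ ⟨0, hn2⟩ * C i j ⟨0, hn2⟩) ^ 2 ≤
      16 * n1 * m) :
    1 / (m : ℝ) * ‖toE ((∑ i, ent11 (B i) • Omat (C i)) *ᵥ ofE (e1 n2))‖ ≤
      4 * Real.sqrt (n1 / m) := by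
  have hm' : (0 : ℝ) < m := Nat.cast_pos.2 hm
  rw [norm_sum_ent11_smul_Omat_mulVec_e1 hn1 hn2]
  calc _ ≤ 1 / (m : ℝ) * √(4 ^ 2 * (n1 / m) * m ^ 2) := by
        gcongr
        rwa [show (4 : ℝ) ^ 2 * (n1 / m) * m ^ 2 = 16 * n1 * m by field_simp; ring]
    _ = 4 * √(n1 / m) := by
        rw [Real.sqrt_mul' _ (sq_nonneg _), Real.sqrt_mul (by norm_num), Real.sqrt_sq (by norm_num),
          Real.sqrt_sq hm'.le]
        field_simp

lemma Atil_apply_zero_of_ne {m : ℕ} (hn2 : 0 < n2) (A Ahat : Fin m → Matrix (Fin n1) (Fin n2) ℝ)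
    (i : Fin m) {j : Fin n1} (hj : (j : ℕ) ≠ 0) :
    Atil A Ahat i j ⟨0, hn2⟩ = Ahat i j ⟨0, hn2⟩ := by
  simp [Atil, hj]

end Measurements

/-- Lemma `randombound1`. -/
theorem statement4 :
    ∃ C c : ℝ, 0 < C ∧ 0 < c ∧
      ∀ (n1 n2 m : ℕ), 0 < n1 → 0 < n2 → 0 < m →
      ∀ (Ω : Type) (_ : MeasurableSpace Ω) (μ : Measure Ω), IsProbabilityMeasure μ →
      ∀ (A Ahat : Ω → Fin m → Matrix (Fin n1) (Fin n2) ℝ),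
      (Measure.map
          (fun ω (p : (Fin m × Fin n1 × Fin n2) ⊕ (Fin m × Fin n1 × Fin n2)) =>
            Sum.elim (fun q : Fin m × Fin n1 × Fin n2 => A ω q.1 q.2.1 q.2.2)
              (fun q : Fin m × Fin n1 × Fin n2 => Ahat ω q.1 q.2.1 q.2.2) p) μ
        = Measure.pi fun _ => gaussianReal 0 1) →
      μ {ω |
          (1 / (m : ℝ)) * ‖toE ((∑ i, ent11 (A ω i) • Omat (A ω i)) *ᵥ ofE (e1 n2))‖
            ≤ 4 * Real.sqrt (n1 / m) ∧
          (1 / (m : ℝ)) *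
              ‖toE ((∑ i, ent11 (A ω i) • Omat (Atil (A ω) (Ahat ω) i)) *ᵥ ofE (e1 n2))‖
            ≤ 4 * Real.sqrt (n1 / m)}
        ≥ ENNReal.ofReal (1 - C * Real.exp (-c * min (m : ℝ) (min (n1 : ℝ) (n2 : ℝ)))) := by
  refine ⟨4, 1 / 2, by norm_num, by norm_num, ?_⟩
  intro n1 n2 m hn1 hn2 hm Ω _ μ _ A Ahat hlaw
  have : Nonempty (Fin m) := ⟨⟨0, hm⟩⟩
  have hκ : Fintype.card {j : Fin n1 // (j : ℕ) ≠ 0} ≤ n1 :=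
    (Fintype.card_subtype_le _).trans (Fintype.card_fin n1).le
  -- `g` is read off the (1,1) entries, `x` off the first columns below row 1 of `A_i` resp. `Â_i`
  have hdiag : Function.Injective fun i : Fin m => (i, (⟨0, hn1⟩ : Fin n1), (⟨0, hn2⟩ : Fin n2)) :=
    fun i i' h => (Prod.mk.inj h).1
  have hcol : Function.Injective fun p : {j : Fin n1 // (j : ℕ) ≠ 0} × Fin m =>
      (p.2, (p.1 : Fin n1), (⟨0, hn2⟩ : Fin n2)) := by
    rintro ⟨⟨j, _⟩, i⟩ ⟨⟨j', _⟩, i'⟩ h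
    simp_all
  have hA := measure_lt_sum_sq_inner_le_of_map_eq_pi hlaw
    (Sum.inl_injective.comp hdiag |>.sumElim (Sum.inl_injective.comp hcol) fun _ p h =>
      p.1.2 (by simp_all [Prod.ext_iff, ← Fin.val_inj])) hκ
  have hAhat := measure_lt_sum_sq_inner_le_of_map_eq_pi hlaw
    (Sum.inl_injective.comp hdiag |>.sumElim (Sum.inr_injective.comp hcol) fun _ _ h =>
      Sum.inl_ne_inr h) hκ
  simp only [Fintype.card_fin, Function.comp_apply, Sum.elim_inl, Sum.elim_inr] at hA hAhat
  refine ofReal_one_sub_le_measure (by positivity) <| (measure_mono ?_).trans <|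
    (measure_union_le _ _).trans <| (add_le_add hA hAhat).trans <|
      (two_mul _).symm.trans_le (two_mul_ofReal_exp_add_le m n1 n2)
  intro ω hω
  by_contra hsmall
  simp only [Set.mem_union, Set.mem_ofPred_eq, not_or, not_lt] at hsmall
  refine hω ⟨one_div_mul_norm_sum_ent11_smul_Omat_mulVec_e1_le hn1 hn2 hm _ _ hsmall.1,
    one_div_mul_norm_sum_ent11_smul_Omat_mulVec_e1_le hn1 hn2 hm _ _ ?_⟩
  refine le_of_eq_of_le (Finset.sum_congr rfl fun k _ => ?_) hsmall.2
  simp only [Atil_apply_zero_of_ne hn2 _ _ _ k.2]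

end ALSPaper
end
end

section
/- For every K ≥ 1 there exists a constant C depending only on K such that the following holds. Let T ∈ ℕ, η > 0, δ ∈ (0,1), and let v, ṽ ∈ ℝ^{n2} be unit vectors. Suppose: (i) both 𝒜 and Ã satisfy the RIP with constant δ; (ii) (1/m)·‖(Σ_i (A_i)_{1,1} O_i) v_⋆‖ ≤ 4√(n1/m) and (1/m)·‖(Σ_i (A_i)_{1,1} Õ_i) v_⋆‖ ≤ 4√(n1/m); (iii) (1/m)·‖(Σ_i (A_i)_{1,1} O_i) ṽ^⊥‖ ≤ K·√((log T + log η)/m)·‖ṽ^⊥‖ and (1/m)·‖(Σ_i (A_i)_{1,1} Õ_i) v^⊥‖ ≤ K·√((log T + log η)/m)·‖ṽ^⊥‖. Then ‖[(𝒜*𝒜 − Ã*Ã)(u_⋆v_⋆ᵀ)] ṽ‖ ≤ C·(√((log T + log η)/m) + √(n1/m)·‖ṽ^∥‖) + δ·‖v − ṽ‖. -/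
open MeasureTheory ProbabilityTheory Matrix Finset
open scoped BigOperators ENNReal NNReal RealInnerProductSpace

noncomputable section

namespace ALSPaper

/-! With `Y = e1 e1ᵀ` and `aᵢ = (Aᵢ)₁₁ = (Ãᵢ)₁₁`, the common diagonal blocks cancel and
`(𝒜*𝒜 - Ã*Ã) Y = m⁻¹ Σ aᵢ (Oᵢ - Õᵢ)`. Split `ṽ = ṽ∥ + ṽ⊥` for the `Oᵢ` part and
`ṽ = ṽ∥ + v⊥ + (ṽ⊥ - v⊥)` for the `Õᵢ` part: all pieces but the last are bounded by hypotheses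
(ii) and (iii). On `z = ṽ⊥ - v⊥ ⊥ e1` the matrix `m⁻¹ Σ aᵢ Õᵢ` acts as `z ↦ ⟪Ã Y, Ã (e1 zᵀ)⟫ e1`,
a cross term of two orthogonal rank-one matrices, which the RIP bounds by `δ ‖z‖ ≤ δ ‖v - ṽ‖`. -/

variable {n n1 n2 m : ℕ}

lemma toE_ofE (x : EuclideanSpace ℝ (Fin n)) : toE (ofE x) = x := rfl

lemma toE_smul (c : ℝ) (x : Fin n → ℝ) : toE (c • x) = c • toE x := rfl

lemma inner_eq_dotProduct (x y : EuclideanSpace ℝ (Fin n)) : ⟪x, y⟫ = ofE x ⬝ᵥ ofE y := by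
  simp [PiLp.inner_apply, dotProduct, ofE, mul_comm]

lemma norm_eq_sqrt_dotProduct (x : EuclideanSpace ℝ (Fin n)) : ‖x‖ = √(ofE x ⬝ᵥ ofE x) := by
  rw [norm_eq_sqrt_real_inner, inner_eq_dotProduct]

lemma dotProduct_e1_self (hn : 0 < n) : ofE (e1 n) ⬝ᵥ ofE (e1 n) = 1 := by
  have h0 : ∀ i : Fin n, (i : ℕ) = 0 ↔ i = ⟨0, hn⟩ := fun i => by simp [Fin.ext_iff]
  simp [e1, ofE, toE, dotProduct, h0]

lemma norm_e1 (hn : 0 < n) : ‖e1 n‖ = 1 := by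
  rw [norm_eq_sqrt_dotProduct, dotProduct_e1_self hn, Real.sqrt_one]

lemma inner_e1_perp (hn : 0 < n) (x : EuclideanSpace ℝ (Fin n)) : ⟪e1 n, perp x⟫ = 0 := by
  rw [perp, par, inner_sub_right, inner_smul_right, real_inner_self_eq_norm_sq, norm_e1 hn]
  ring

lemma norm_par (hn : 0 < n) (x : EuclideanSpace ℝ (Fin n)) : ‖par x‖ = |⟪e1 n, x⟫| := by
  rw [par, norm_smul, norm_e1 hn, mul_one, Real.norm_eq_abs]

lemma norm_perp_le (hn : 0 < n) (x : EuclideanSpace ℝ (Fin n)) : ‖perp x‖ ≤ ‖x‖ := by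
  have horth : ⟪par x, perp x⟫ = 0 := by rw [par, inner_smul_left, inner_e1_perp hn, mul_zero]
  have hsplit := norm_add_sq_real (par x) (perp x)
  rw [horth, show par x + perp x = x from add_sub_cancel _ _] at hsplit
  exact pow_le_pow_iff_left₀ (norm_nonneg _) (norm_nonneg _) two_ne_zero |>.mp
    (by nlinarith [sq_nonneg ‖par x‖])

lemma par_add_perp (x : EuclideanSpace ℝ (Fin n)) : par x + perp x = x :=
  add_sub_cancel _ _

lemma perp_sub (x y : EuclideanSpace ℝ (Fin n)) : perp (x - y) = perp x - perp y := by
  simp only [perp, par, inner_sub_right, sub_smul]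
  abel

lemma frobInner_comm (A B : Matrix (Fin n1) (Fin n2) ℝ) : frobInner A B = frobInner B A := by
  simp [frobInner, mul_comm]

lemma frobInner_vecMulVec_left (a : Fin n1 → ℝ) (b : Fin n2 → ℝ)
    (M : Matrix (Fin n1) (Fin n2) ℝ) :
    frobInner (vecMulVec a b) M = a ⬝ᵥ (M *ᵥ b) := by
  simp only [frobInner, vecMulVec, dotProduct, mulVec, of_apply, Finset.mul_sum]
  exact Finset.sum_congr rfl fun i _ => Finset.sum_congr rfl fun j _ => by ring

lemma frobNorm_vecMulVec_sq (a : Fin n1 → ℝ) (b : Fin n2 → ℝ) :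
    frobNorm (vecMulVec a b) ^ 2 = (a ⬝ᵥ a) * (b ⬝ᵥ b) := by
  have hsq : frobInner (vecMulVec a b) (vecMulVec a b) = (a ⬝ᵥ a) * (b ⬝ᵥ b) := by
    simp only [frobInner, vecMulVec, dotProduct, of_apply, Finset.sum_mul_sum]
    exact Finset.sum_congr rfl fun i _ => Finset.sum_congr rfl fun j _ => by ring
  rw [frobNorm, Real.sq_sqrt (hsq ▸ mul_nonneg (dotProduct_self_star_nonneg a)
    (dotProduct_self_star_nonneg b)), hsq]

lemma rank_vecMulVec_le (a : Fin n1 → ℝ) (b : Fin n2 → ℝ) : (vecMulVec a b).rank ≤ 1 := by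
  rw [vecMulVec_eq (Fin 1)]
  exact (rank_mul_le_left _ _).trans ((rank_le_card_width _).trans (by simp))

lemma calA_add (A : Fin m → Matrix (Fin n1) (Fin n2) ℝ) (X Y : Matrix (Fin n1) (Fin n2) ℝ) :
    calA A (X + Y) = calA A X + calA A Y := by
  ext i
  simp [calA, toE, frobInner, mul_add, Finset.sum_add_distrib]

lemma calA_smul (A : Fin m → Matrix (Fin n1) (Fin n2) ℝ) (c : ℝ)
    (X : Matrix (Fin n1) (Fin n2) ℝ) :
    calA A (c • X) = c • calA A X := by
  ext i
  simp [calA, toE, frobInner, Finset.mul_sum, mul_left_comm]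

lemma calA_zero (A : Fin m → Matrix (Fin n1) (Fin n2) ℝ) : calA A 0 = 0 := by
  simpa using calA_smul A 0 0

lemma norm_toE_smul_mulVec (c : ℝ) (M : Matrix (Fin n1) (Fin n2) ℝ) (x : Fin n2 → ℝ) :
    ‖toE ((c • M) *ᵥ x)‖ = |c| * ‖toE (M *ᵥ x)‖ := by
  rw [smul_mulVec, toE_smul, norm_smul, Real.norm_eq_abs]

lemma HasRIP.abs_inner_calA_vecMulVec_le {A : Fin m → Matrix (Fin n1) (Fin n2) ℝ} {δ : ℝ}
    (hA : HasRIP A δ) {u : Fin n1 → ℝ} {w z : Fin n2 → ℝ} (hu : u ⬝ᵥ u = 1) (hw : w ⬝ᵥ w = 1)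
    (hwz : w ⬝ᵥ z = 0) :
    |⟪calA A (vecMulVec u w), calA A (vecMulVec u z)⟫| ≤ δ * √(z ⬝ᵥ z) := by
  set r := √(z ⬝ᵥ z)
  set p := calA A (vecMulVec u w)
  set q := calA A (vecMulVec u z)
  have hr0 : 0 ≤ r := Real.sqrt_nonneg _
  have hr2 : r ^ 2 = z ⬝ᵥ z := Real.sq_sqrt (dotProduct_self_star_nonneg z)
  -- `‖u (r w ± z)ᵀ‖_F² = 2r²`, and polarization turns the two RIP bounds into one on `r ⟪p, q⟫`.
  have hRIP : ∀ s : ℝ, s ^ 2 = 1 →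
      (1 - δ) * (2 * r ^ 2) ≤ ‖r • p + s • q‖ ^ 2 ∧
        ‖r • p + s • q‖ ^ 2 ≤ (1 + δ) * (2 * r ^ 2) := by
    intro s hs
    have hfrob : frobNorm (vecMulVec u (r • w + s • z)) ^ 2 = 2 * r ^ 2 := by
      rw [frobNorm_vecMulVec_sq, hu, one_mul]
      simp only [dotProduct_add, add_dotProduct, dotProduct_smul, smul_dotProduct, hw, hwz,
        dotProduct_comm z w, smul_eq_mul]
      linear_combination (z ⬝ᵥ z) * hs - hr2
    have h := hA (vecMulVec u (r • w + s • z)) ((rank_vecMulVec_le _ _).trans (by norm_num))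
    rwa [hfrob, vecMulVec_add, vecMulVec_smul, vecMulVec_smul, calA_add, calA_smul,
      calA_smul] at h
  obtain ⟨h₁, h₂⟩ := hRIP 1 (one_pow 2)
  obtain ⟨h₃, h₄⟩ := hRIP (-1) (by norm_num)
  have hpol : ‖r • p + (1 : ℝ) • q‖ ^ 2 - ‖r • p + (-1 : ℝ) • q‖ ^ 2 = 4 * r * ⟪p, q⟫ := by
    rw [one_smul, neg_one_smul, ← sub_eq_add_neg, norm_add_sq_real, norm_sub_sq_real,
      real_inner_smul_left]
    ring
  have hscaled : r * |⟪p, q⟫| ≤ r * (δ * r) := by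
    have h : |r * ⟪p, q⟫| ≤ δ * r ^ 2 := abs_le.mpr ⟨by linarith, by linarith⟩
    rw [abs_mul, abs_of_nonneg hr0] at h
    linarith
  rcases hr0.eq_or_lt with hr | hr
  · have hz0 : z = 0 := dotProduct_self_eq_zero.mp (by rw [← hr2, ← hr]; ring)
    have hz : vecMulVec u z = 0 := by
      ext i j
      simp [hz0, vecMulVec]
    simp only [q, hz, calA_zero, inner_zero_right, abs_zero, ← hr, mul_zero, le_refl]
  · exact le_of_mul_le_mul_left hscaled hr

lemma calAdj_calA (A : Fin m → Matrix (Fin n1) (Fin n2) ℝ) (X : Matrix (Fin n1) (Fin n2) ℝ) :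
    calAdj A (calA A X) = (m : ℝ)⁻¹ • ∑ i, frobInner (A i) X • A i := by
  have hm : (√m)⁻¹ * (√m)⁻¹ = (m : ℝ)⁻¹ := by rw [← mul_inv, Real.mul_self_sqrt m.cast_nonneg]
  simp only [calAdj, calA, ofE, toE, Equiv.apply_symm_apply, Finset.smul_sum, smul_smul,
    ← mul_assoc, hm]

lemma inner_calA (A : Fin m → Matrix (Fin n1) (Fin n2) ℝ) (X Z : Matrix (Fin n1) (Fin n2) ℝ) :
    ⟪calA A X, calA A Z⟫ = (m : ℝ)⁻¹ * ∑ i, frobInner (A i) X * frobInner (A i) Z := by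
  have hm : (√m)⁻¹ * (√m)⁻¹ = (m : ℝ)⁻¹ := by rw [← mul_inv, Real.mul_self_sqrt m.cast_nonneg]
  simp only [inner_eq_dotProduct, calA, ofE, toE, Equiv.apply_symm_apply, dotProduct,
    Finset.mul_sum, ← hm]
  exact Finset.sum_congr rfl fun i _ => by ring

lemma ent11_eq_dotProduct (M : Matrix (Fin n1) (Fin n2) ℝ) :
    ent11 M = ofE (e1 n1) ⬝ᵥ (M *ᵥ ofE (e1 n2)) :=
  frobInner_vecMulVec_left _ _ _

lemma ent11_Dmat (hn1 : 0 < n1) (hn2 : 0 < n2) (M : Matrix (Fin n1) (Fin n2) ℝ) :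
    ent11 (Dmat M) = ent11 M := by
  have hQ : vecMulVec (ofE (e1 n2)) (ofE (e1 n2)) *ᵥ ofE (e1 n2) = ofE (e1 n2) := by
    rw [vecMulVec_mulVec, dotProduct_e1_self hn2, MulOpposite.op_one, one_smul]
  have hP (y : Fin n1 → ℝ) :
      ofE (e1 n1) ⬝ᵥ (vecMulVec (ofE (e1 n1)) (ofE (e1 n1)) *ᵥ y) = ofE (e1 n1) ⬝ᵥ y := by
    rw [vecMulVec_mulVec, op_smul_eq_smul, dotProduct_smul, dotProduct_e1_self hn1, smul_eq_mul,
      mul_one]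
  rw [ent11_eq_dotProduct, ent11_eq_dotProduct, Dmat, add_mulVec, ← mulVec_mulVec,
    ← mulVec_mulVec, hQ, ← mulVec_mulVec, sub_mulVec, one_mulVec, hQ, sub_self, mulVec_zero,
    add_zero, hP]

lemma ent11_eq_of_Dmat_eq (hn1 : 0 < n1) (hn2 : 0 < n2) {M M' : Matrix (Fin n1) (Fin n2) ℝ}
    (h : Dmat M' = Dmat M) : ent11 M' = ent11 M := by
  rw [← ent11_Dmat hn1 hn2 M', h, ent11_Dmat hn1 hn2]

lemma Dmat_add_Omat (M : Matrix (Fin n1) (Fin n2) ℝ) : Dmat M + Omat M = M := by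
  simp only [Dmat, Omat, Matrix.sub_mul, Matrix.mul_sub, Matrix.one_mul, Matrix.mul_one]
  abel

lemma Omat_mulVec_of_dotProduct_e1_eq_zero (M : Matrix (Fin n1) (Fin n2) ℝ) {z : Fin n2 → ℝ}
    (hz : ofE (e1 n2) ⬝ᵥ z = 0) :
    Omat M *ᵥ z = (ofE (e1 n1) ⬝ᵥ (M *ᵥ z)) • ofE (e1 n1) := by
  have hQz : vecMulVec (ofE (e1 n2)) (ofE (e1 n2)) *ᵥ z = 0 := by
    rw [vecMulVec_mulVec, hz, MulOpposite.op_zero, zero_smul]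
  rw [Omat, add_mulVec, ← mulVec_mulVec, ← mulVec_mulVec, sub_mulVec, one_mulVec, hQz, sub_zero,
    ← mulVec_mulVec, hQz, mulVec_zero, add_zero, vecMulVec_mulVec, op_smul_eq_smul]

lemma calAdj_calA_sub_eq_of_Dmat_eq (hn1 : 0 < n1) (hn2 : 0 < n2)
    {A At : Fin m → Matrix (Fin n1) (Fin n2) ℝ} (hD : ∀ i, Dmat (At i) = Dmat (A i)) :
    calAdj A (calA A (vecMulVec (ofE (e1 n1)) (ofE (e1 n2))))
        - calAdj At (calA At (vecMulVec (ofE (e1 n1)) (ofE (e1 n2))))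
      = (m : ℝ)⁻¹ • (∑ i, ent11 (A i) • Omat (A i) - ∑ i, ent11 (A i) • Omat (At i)) := by
  have hterm (i : Fin m) : frobInner (A i) (vecMulVec (ofE (e1 n1)) (ofE (e1 n2))) • A i
      - frobInner (At i) (vecMulVec (ofE (e1 n1)) (ofE (e1 n2))) • At i
      = ent11 (A i) • Omat (A i) - ent11 (A i) • Omat (At i) := by
    have hdiff : A i - At i = Omat (A i) - Omat (At i) := by
      conv_lhs => rw [← Dmat_add_Omat (A i), ← Dmat_add_Omat (At i), hD i]
      abel
    rw [frobInner_comm, frobInner_comm (At i), ← ent11, ← ent11,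
      ent11_eq_of_Dmat_eq hn1 hn2 (hD i), ← smul_sub, hdiff, smul_sub]
  rw [calAdj_calA, calAdj_calA, ← smul_sub, ← Finset.sum_sub_distrib, ← Finset.sum_sub_distrib]
  simp only [hterm]

lemma HasRIP.inv_mul_norm_sum_smul_Omat_mulVec_le (hn1 : 0 < n1) (hn2 : 0 < n2)
    {A : Fin m → Matrix (Fin n1) (Fin n2) ℝ} {δ : ℝ} (hA : HasRIP A δ)
    {z : EuclideanSpace ℝ (Fin n2)} (hz : ⟪e1 n2, z⟫ = 0) :
    (m : ℝ)⁻¹ * ‖toE ((∑ i, ent11 (A i) • Omat (A i)) *ᵥ ofE z)‖ ≤ δ * ‖z‖ := by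
  rw [inner_eq_dotProduct] at hz
  have hcross : ((m : ℝ)⁻¹ • ∑ i, ent11 (A i) • Omat (A i)) *ᵥ ofE z
      = ⟪calA A (vecMulVec (ofE (e1 n1)) (ofE (e1 n2))),
          calA A (vecMulVec (ofE (e1 n1)) (ofE z))⟫ • ofE (e1 n1) := by
    rw [inner_calA, smul_mulVec, sum_mulVec, mul_smul, Finset.sum_smul]
    congr 1
    refine Finset.sum_congr rfl fun i _ => ?_
    rw [smul_mulVec, Omat_mulVec_of_dotProduct_e1_eq_zero _ hz, smul_smul, ent11_eq_dotProduct,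
      frobInner_comm (A i), frobInner_comm (A i), frobInner_vecMulVec_left,
      frobInner_vecMulVec_left]
  have hRIP :=
    hA.abs_inner_calA_vecMulVec_le (dotProduct_e1_self hn1) (dotProduct_e1_self hn2) hz
  rw [← norm_eq_sqrt_dotProduct] at hRIP
  have hm : 0 ≤ (m : ℝ)⁻¹ := by positivity
  rwa [← abs_of_nonneg hm, ← norm_toE_smul_mulVec, hcross, toE_smul, toE_ofE, norm_smul,
    norm_e1 hn1, mul_one, Real.norm_eq_abs]

lemma norm_sub_mulVec_le (hn2 : 0 < n2) (N Ñ : Matrix (Fin n1) (Fin n2) ℝ)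
    (v vt : EuclideanSpace ℝ (Fin n2)) :
    ‖toE ((N - Ñ) *ᵥ ofE vt)‖
      ≤ (‖toE (N *ᵥ ofE (e1 n2))‖ + ‖toE (Ñ *ᵥ ofE (e1 n2))‖) * ‖par vt‖
        + ‖toE (N *ᵥ ofE (perp vt))‖ + ‖toE (Ñ *ᵥ ofE (perp v))‖
        + ‖toE (Ñ *ᵥ ofE (perp (vt - v)))‖ := by
  set f := Matrix.toLpLin 2 2 N
  set g := Matrix.toLpLin 2 2 Ñ
  have hpar (h : EuclideanSpace ℝ (Fin n2) →ₗ[ℝ] EuclideanSpace ℝ (Fin n1)) :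
      ‖h (par vt)‖ = ‖h (e1 n2)‖ * ‖par vt‖ := by
    rw [norm_par hn2, par, map_smul, norm_smul, Real.norm_eq_abs, mul_comm]
  have hf : f vt = f (par vt) + f (perp vt) := by rw [← map_add, par_add_perp]
  have hg : g vt = g (par vt) + g (perp v) + g (perp (vt - v)) := by
    rw [add_assoc, ← map_add, ← map_add, perp_sub, add_sub_cancel, par_add_perp]
  rw [sub_mulVec]
  change ‖f vt - g vt‖ ≤ (‖f (e1 n2)‖ + ‖g (e1 n2)‖) * ‖par vt‖ + ‖f (perp vt)‖
    + ‖g (perp v)‖ + ‖g (perp (vt - v))‖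
  calc ‖f vt - g vt‖
      = ‖f (par vt) - g (par vt) + f (perp vt) - g (perp v) - g (perp (vt - v))‖ := by
        rw [hf, hg]; abel_nf
    _ ≤ ‖f (par vt)‖ + ‖g (par vt)‖ + ‖f (perp vt)‖ + ‖g (perp v)‖ + ‖g (perp (vt - v))‖ := by
        grw [norm_sub_le, norm_sub_le, norm_add_le, norm_sub_le]
    _ = _ := by rw [hpar f, hpar g]; ring

theorem statement7_general (K : ℝ) :
    ∃ C : ℝ, 0 < C ∧
      ∀ (n1 n2 m : ℕ) (T : ℕ) (η δ : ℝ), 0 < η → 0 < δ → δ < 1 →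
      ∀ (A At : Fin m → Matrix (Fin n1) (Fin n2) ℝ),
      (∀ i, Dmat (At i) = Dmat (A i)) →
      ∀ (v vt : EuclideanSpace ℝ (Fin n2)), ‖v‖ = 1 → ‖vt‖ = 1 →
      HasRIP A δ → HasRIP At δ →
      (1 / (m : ℝ)) * ‖toE ((∑ i, ent11 (A i) • Omat (A i)) *ᵥ ofE (e1 n2))‖
          ≤ 4 * Real.sqrt (n1 / m) →
      (1 / (m : ℝ)) * ‖toE ((∑ i, ent11 (A i) • Omat (At i)) *ᵥ ofE (e1 n2))‖
          ≤ 4 * Real.sqrt (n1 / m) →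
      (1 / (m : ℝ)) * ‖toE ((∑ i, ent11 (A i) • Omat (A i)) *ᵥ ofE (perp vt))‖
          ≤ K * Real.sqrt ((Real.log T + Real.log η) / m) * ‖perp vt‖ →
      (1 / (m : ℝ)) * ‖toE ((∑ i, ent11 (A i) • Omat (At i)) *ᵥ ofE (perp v))‖
          ≤ K * Real.sqrt ((Real.log T + Real.log η) / m) * ‖perp vt‖ →
      ‖toE ((calAdj A (calA A (vecMulVec (ofE (e1 n1)) (ofE (e1 n2))))
            - calAdj At (calA At (vecMulVec (ofE (e1 n1)) (ofE (e1 n2))))) *ᵥ ofE vt)‖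
        ≤ C * (Real.sqrt ((Real.log T + Real.log η) / m)
              + Real.sqrt (n1 / m) * ‖par vt‖)
          + δ * ‖v - vt‖ := by
  refine ⟨2 * |K| + 8, by positivity, ?_⟩
  intro n1 n2 m T η δ _ hδ _ A At hD v vt _ hvt _ hAt hN₁ hÑ₁ hN₂ hÑ₂
  have hn2 : 0 < n2 :=
    Nat.pos_of_ne_zero fun h => by subst h; simp [Subsingleton.elim vt 0] at hvt
  rcases n1.eq_zero_or_pos with rfl | hn1
  · rw [Subsingleton.elim (toE _) 0, norm_zero]
    positivity
  have hÑ₃ := hAt.inv_mul_norm_sum_smul_Omat_mulVec_le hn1 hn2 (inner_e1_perp hn2 (vt - v))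
  simp only [ent11_eq_of_Dmat_eq hn1 hn2 (hD _)] at hÑ₃
  have hsplit := norm_sub_mulVec_le hn2 (∑ i, ent11 (A i) • Omat (A i))
    (∑ i, ent11 (A i) • Omat (At i)) v vt
  rw [calAdj_calA_sub_eq_of_Dmat_eq hn1 hn2 hD, norm_toE_smul_mulVec,
    abs_of_nonneg (by positivity)]
  rw [one_div] at hN₁ hÑ₁ hN₂ hÑ₂
  set q := √((Real.log T + Real.log η) / m)
  have hq : 0 ≤ q := Real.sqrt_nonneg _
  have hperp : K * q * ‖perp vt‖ ≤ |K| * q :=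
    calc K * q * ‖perp vt‖ ≤ |K| * q * ‖perp vt‖ := by gcongr; exact le_abs_self K
      _ ≤ |K| * q := mul_le_of_le_one_right (by positivity) (hvt ▸ norm_perp_le hn2 vt)
  have hdist : δ * ‖perp (vt - v)‖ ≤ δ * ‖v - vt‖ :=
    mul_le_mul_of_nonneg_left (norm_sub_rev v vt ▸ norm_perp_le hn2 _) hδ.le
  have hpar := mul_le_mul_of_nonneg_right (add_le_add hN₁ hÑ₁) (norm_nonneg (par vt))
  have hm : 0 ≤ (m : ℝ)⁻¹ := by positivity
  have hp : 0 ≤ |K| * (√((n1 : ℝ) / m) * ‖par vt‖) := by positivity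
  linarith [mul_le_mul_of_nonneg_left hsplit hm]

/-- Lemma `stochasticbound`. -/
theorem statement7 (K : ℝ) (hK : 1 ≤ K) :
    ∃ C : ℝ, 0 < C ∧
      ∀ (n1 n2 m : ℕ) (T : ℕ) (η δ : ℝ), 0 < η → 0 < δ → δ < 1 →
      ∀ (A At : Fin m → Matrix (Fin n1) (Fin n2) ℝ),
      (∀ i, Dmat (At i) = Dmat (A i)) →
      ∀ (v vt : EuclideanSpace ℝ (Fin n2)), ‖v‖ = 1 → ‖vt‖ = 1 →
      HasRIP A δ → HasRIP At δ →
      (1 / (m : ℝ)) * ‖toE ((∑ i, ent11 (A i) • Omat (A i)) *ᵥ ofE (e1 n2))‖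
          ≤ 4 * Real.sqrt (n1 / m) →
      (1 / (m : ℝ)) * ‖toE ((∑ i, ent11 (A i) • Omat (At i)) *ᵥ ofE (e1 n2))‖
          ≤ 4 * Real.sqrt (n1 / m) →
      (1 / (m : ℝ)) * ‖toE ((∑ i, ent11 (A i) • Omat (A i)) *ᵥ ofE (perp vt))‖
          ≤ K * Real.sqrt ((Real.log T + Real.log η) / m) * ‖perp vt‖ →
      (1 / (m : ℝ)) * ‖toE ((∑ i, ent11 (A i) • Omat (At i)) *ᵥ ofE (perp v))‖
          ≤ K * Real.sqrt ((Real.log T + Real.log η) / m) * ‖perp vt‖ →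
      ‖toE ((calAdj A (calA A (vecMulVec (ofE (e1 n1)) (ofE (e1 n2))))
            - calAdj At (calA At (vecMulVec (ofE (e1 n1)) (ofE (e1 n2))))) *ᵥ ofE vt)‖
        ≤ C * (Real.sqrt ((Real.log T + Real.log η) / m)
              + Real.sqrt (n1 / m) * ‖par vt‖)
          + δ * ‖v - vt‖ :=
  statement7_general K

end ALSPaper
end
end
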